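/- For every n ≥ 3, there is a gap between border rank and tensor rank: the border rank of W_n equals 2 while the tensor rank of W_n equals n. In particular, the set {T ∈ (ℂ²)^{⊗n} : rank(T) ≤ 2} is not closed. -/

import Mathlib

/-- `T` admits a tensor decomposition with at most `r` elementary tensors. -/
def hasRankLE (n d : ℕ) (T : (Fin n → Fin d) → ℂ) (r : ℕ) : Prop :=
  ∃ v : Fin r → Fin n → Fin d → ℂ, ∀ j, T j = ∑ α, ∏ i, v α i (j i)

/-- The tensor rank. -/
noncomputable def tensorRank (n d : ℕ) (T : (Fin n → Fin d) → ℂ) : ℕ :=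
  sInf {r | hasRankLE n d T r}

/-- `T` is a limit of tensors of rank at most `r`. -/
def hasBorderRankLE (n d : ℕ) (T : (Fin n → Fin d) → ℂ) (r : ℕ) : Prop :=
  T ∈ closure {S : (Fin n → Fin d) → ℂ | hasRankLE n d S r}

/-- The border rank. -/
noncomputable def borderRank (n d : ℕ) (T : (Fin n → Fin d) → ℂ) : ℕ :=
  sInf {r | hasBorderRankLE n d T r}

/-- The n-partite W-state. -/
noncomputable def Wstate (n : ℕ) : (Fin n → Fin 2) → ℂ := fun j =>
  if (Finset.univ.filter (fun i => j i = 1)).card = 1 then 1 else 0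

/-!
`W_n = lim_{ε → 0} ε⁻¹ ((e₀ + ε e₁)^{⊗n} - e₀^{⊗n})` has border rank at most 2, and at least 2
because a `2 × 2` minor vanishes on rank-one tensors but not on `W_n`. It has rank at most `n` as a
sum of `n` product states. For the lower bound one shows more generally that
`W_n + c e₀^{⊗n}` has rank at least `n`, by induction: contracting the first factor of a
decomposition with a suitable vector `(1, c')` kills one of its terms and maps
`W_{n+1} + c e₀^{⊗(n+1)}` to `W_n + (c + c') e₀^{⊗n}`. As `n > 2`, `W_n` lies in the closure of
the tensors of rank at most 2 but not in that set.
-/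

open Finset Filter Topology

lemma Nat.sInf_setOf_eq_succ {P : ℕ → Prop} (hP : Monotone P) {k : ℕ} (hk : P (k + 1))
    (hk' : ¬ P k) : sInf {r | P r} = k + 1 := by
  refine IsLeast.csInf_eq ⟨hk, fun r hr => ?_⟩
  by_contra! hlt
  exact hk' (hP (Nat.le_of_lt_succ hlt) hr)

section Rank

variable {n d : ℕ}

lemma hasRankLE_monotone (hn : 0 < n) (T : (Fin n → Fin d) → ℂ) :
    Monotone (hasRankLE n d T) := by
  rintro r r' hr ⟨v, hv⟩
  obtain ⟨k, rfl⟩ := Nat.exists_eq_add_of_le hr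
  refine ⟨Fin.append v 0, fun j => ?_⟩
  simp [hv, Fin.sum_univ_add, hn.ne']

lemma hasBorderRankLE_monotone (hn : 0 < n) (T : (Fin n → Fin d) → ℂ) :
    Monotone (hasBorderRankLE n d T) :=
  fun _ _ hr h => closure_mono (fun S => hasRankLE_monotone hn S hr) h

lemma hasRankLE_of_eq_sum_mul_prod {r : ℕ} {T : (Fin (n + 1) → Fin d) → ℂ} (s : Fin r → ℂ)
    (v : Fin r → Fin (n + 1) → Fin d → ℂ) (hT : ∀ j, T j = ∑ α, s α * ∏ i, v α i (j i)) :
    hasRankLE (n + 1) d T r := by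
  refine ⟨fun α => Fin.cons (s α • v α 0) (Fin.tail (v α)), fun j => ?_⟩
  simp [hT, Fin.prod_univ_succ, mul_assoc, Fin.tail]

lemma exists_hasRankLE_contract {r : ℕ} {T : (Fin (n + 2) → Fin 2) → ℂ}
    (hT : hasRankLE (n + 2) 2 T (r + 1)) (hslice : ∃ j, T (Fin.cons 1 j) ≠ 0) :
    ∃ c : ℂ, hasRankLE (n + 1) 2 (fun j => T (Fin.cons 0 j) + c * T (Fin.cons 1 j)) r := by
  obtain ⟨v, hv⟩ := hT
  have hT_cons : ∀ x j, T (Fin.cons x j) = ∑ α, v α 0 x * ∏ i, v α i.succ (j i) := by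
    simp [hv, Fin.prod_univ_succ]
  obtain ⟨α₀, hα₀⟩ : ∃ α₀, v α₀ 0 1 ≠ 0 := by
    by_contra! h
    obtain ⟨j, hj⟩ := hslice
    simp [hT_cons, h] at hj
  set c := -v α₀ 0 0 / v α₀ 0 1
  have hkill : v α₀ 0 0 + c * v α₀ 0 1 = 0 := by
    rw [div_mul_cancel₀ _ hα₀]; ring
  refine ⟨c, hasRankLE_of_eq_sum_mul_prod (fun β => v (α₀.succAbove β) 0 0 +
    c * v (α₀.succAbove β) 0 1) (fun β i => v (α₀.succAbove β) i.succ) fun j => ?_⟩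
  rw [hT_cons, hT_cons, mul_sum, ← sum_add_distrib, Fin.sum_univ_succAbove _ α₀]
  simp only [← mul_assoc, ← add_mul, hkill, zero_mul, zero_add]

lemma hasRankLE_one_minor {S : (Fin (n + 2) → Fin d) → ℂ} (hS : hasRankLE (n + 2) d S 1)
    (a a' b b' : Fin d) (z : Fin n → Fin d) :
    S (Fin.cons a (Fin.cons b z)) * S (Fin.cons a' (Fin.cons b' z)) =
      S (Fin.cons a (Fin.cons b' z)) * S (Fin.cons a' (Fin.cons b z)) := by
  obtain ⟨v, hv⟩ := hS
  simp only [hv, Fin.sum_univ_one, Fin.prod_univ_succ, Fin.cons_zero, Fin.cons_succ]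
  ring

lemma hasBorderRankLE_one_minor {S : (Fin (n + 2) → Fin d) → ℂ}
    (hS : hasBorderRankLE (n + 2) d S 1) (a a' b b' : Fin d) (z : Fin n → Fin d) :
    S (Fin.cons a (Fin.cons b z)) * S (Fin.cons a' (Fin.cons b' z)) =
      S (Fin.cons a (Fin.cons b' z)) * S (Fin.cons a' (Fin.cons b z)) := by
  unfold hasBorderRankLE at hS
  refine closure_minimal (fun T (hT : hasRankLE (n + 2) d T 1) =>
    hasRankLE_one_minor hT a a' b b' z) ?_ hS
  exact isClosed_eq (by fun_prop) (by fun_prop)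

end Rank

section Wstate

variable {n : ℕ}

def numOnes (j : Fin n → Fin 2) : ℕ := #{i | j i = 1}

lemma Wstate_apply (j : Fin n → Fin 2) : Wstate n j = if numOnes j = 1 then 1 else 0 := rfl

@[simp]
lemma numOnes_cons (x : Fin 2) (j : Fin n → Fin 2) :
    numOnes (Fin.cons x j : Fin (n + 1) → Fin 2) = (if x = 1 then 1 else 0) + numOnes j := by
  simp only [numOnes, card_filter, Fin.sum_univ_succ, Fin.cons_zero, Fin.cons_succ]

@[simp]
lemma numOnes_zero : numOnes (0 : Fin n → Fin 2) = 0 := by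
  simp [numOnes]

lemma prod_ite_eq_pow_numOnes (a : ℂ) (j : Fin n → Fin 2) :
    ∏ i, (if j i = 1 then a else 1) = a ^ numOnes j := by
  simp [prod_ite, numOnes]

noncomputable def WstateAddVacuum (n : ℕ) (c : ℂ) : (Fin n → Fin 2) → ℂ :=
  fun j => Wstate n j + if numOnes j = 0 then c else 0

lemma WstateAddVacuum_zero : WstateAddVacuum n 0 = Wstate n := by
  ext j; simp [WstateAddVacuum]

lemma WstateAddVacuum_contract (c c' : ℂ) :
    (fun j => WstateAddVacuum (n + 2) c (Fin.cons 0 j) +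
      c' * WstateAddVacuum (n + 2) c (Fin.cons 1 j)) = WstateAddVacuum (n + 1) (c + c') := by
  ext j
  simp only [WstateAddVacuum, Wstate_apply, numOnes_cons, Fin.zero_ne_one, if_true, if_false]
  split_ifs <;> first | ring1 | (exfalso; omega)

lemma not_hasRankLE_WstateAddVacuum (m : ℕ) (c : ℂ) :
    ¬ hasRankLE (m + 1) 2 (WstateAddVacuum (m + 1) c) m := by
  induction m generalizing c with
  | zero =>
    rintro ⟨v, hv⟩
    simpa [WstateAddVacuum, Wstate_apply, numOnes] using hv 1
  | succ m ih =>
    intro h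
    obtain ⟨c', hc'⟩ := exists_hasRankLE_contract h ⟨0, by simp [WstateAddVacuum, Wstate_apply]⟩
    exact ih (c + c') (WstateAddVacuum_contract c c' ▸ hc')

lemma not_hasRankLE_Wstate (m : ℕ) : ¬ hasRankLE (m + 1) 2 (Wstate (m + 1)) m :=
  WstateAddVacuum_zero (n := m + 1) ▸ not_hasRankLE_WstateAddVacuum m 0

lemma Wstate_hasRankLE (n : ℕ) : hasRankLE n 2 (Wstate n) n := by
  refine ⟨fun α i b => if (b = 1 ↔ i = α) then 1 else 0, fun j => ?_⟩
  have hprod : ∀ α, ∏ i, (if (j i = 1 ↔ i = α) then (1 : ℂ) else 0) =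
      if ({i | j i = 1} : Finset (Fin n)) = {α} then 1 else 0 := by
    intro α
    simp [prod_boole, Finset.ext_iff]
  simp only [hprod, Wstate, card_eq_one]
  by_cases h : ∃ a, ({i | j i = 1} : Finset (Fin n)) = {a}
  · obtain ⟨a, ha⟩ := h
    simp [ha]
  · simp [not_exists.mp h]

/-- `ε⁻¹ ((e₀ + ε e₁)^{⊗n} - e₀^{⊗n})`. -/
noncomputable def WstateApprox (n : ℕ) (ε : ℂ) : (Fin n → Fin 2) → ℂ :=
  fun j => ε⁻¹ * (ε ^ numOnes j - 0 ^ numOnes j)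

lemma hasRankLE_two_WstateApprox (n : ℕ) (ε : ℂ) :
    hasRankLE (n + 1) 2 (WstateApprox (n + 1) ε) 2 :=
  hasRankLE_of_eq_sum_mul_prod ![ε⁻¹, -ε⁻¹] (fun α _ b => if b = 1 then ![ε, 0] α else 1)
    fun j => by
      simp only [WstateApprox, prod_ite_eq_pow_numOnes, Fin.sum_univ_two, Matrix.cons_val_zero,
        Matrix.cons_val_one, Matrix.cons_val_fin_one]
      ring

lemma tendsto_WstateApprox (n : ℕ) : Tendsto (WstateApprox n) (𝓝[≠] 0) (𝓝 (Wstate n)) := by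
  refine tendsto_pi_nhds.2 fun j => ?_
  simp only [WstateApprox, Wstate_apply]
  generalize numOnes j = k
  cases k with
  | zero => simp
  | succ k =>
    have hpow : Tendsto (fun ε : ℂ => ε ^ k) (𝓝[≠] 0) (𝓝 (0 ^ k)) :=
      ((continuous_pow k).tendsto 0).mono_left nhdsWithin_le_nhds
    refine Tendsto.congr' ?_ (by simpa [zero_pow_eq] using hpow)
    filter_upwards [self_mem_nhdsWithin] with ε hε
    rw [zero_pow k.succ_ne_zero, sub_zero, pow_succ', inv_mul_cancel_left₀ hε]

lemma hasBorderRankLE_two_Wstate (n : ℕ) : hasBorderRankLE (n + 1) 2 (Wstate (n + 1)) 2 :=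
  mem_closure_of_tendsto (tendsto_WstateApprox (n + 1))
    (Eventually.of_forall (hasRankLE_two_WstateApprox n))

lemma not_hasBorderRankLE_one_Wstate (n : ℕ) :
    ¬ hasBorderRankLE (n + 2) 2 (Wstate (n + 2)) 1 := by
  intro h
  simpa [Wstate_apply] using hasBorderRankLE_one_minor h 0 1 0 1 0

end Wstate

theorem borderRank_rank_gap_Wstate (n : ℕ) (hn : 3 ≤ n) :
    borderRank n 2 (Wstate n) = 2 ∧ tensorRank n 2 (Wstate n) = n ∧
    ¬ IsClosed {T : (Fin n → Fin 2) → ℂ | hasRankLE n 2 T 2} := by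
  obtain ⟨m, rfl⟩ : ∃ m, n = m + 3 := ⟨n - 3, by omega⟩
  have hpos : 0 < m + 3 := by omega
  have hborder : hasBorderRankLE (m + 3) 2 (Wstate (m + 3)) 2 := hasBorderRankLE_two_Wstate (m + 2)
  have hrank : ¬ hasRankLE (m + 3) 2 (Wstate (m + 3)) 2 :=
    fun h => not_hasRankLE_Wstate (m + 2) (hasRankLE_monotone hpos _ (by omega) h)
  exact ⟨Nat.sInf_setOf_eq_succ (hasBorderRankLE_monotone hpos _) hborder
      (not_hasBorderRankLE_one_Wstate (m + 1)),
    Nat.sInf_setOf_eq_succ (hasRankLE_monotone hpos _) (Wstate_hasRankLE _)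
      (not_hasRankLE_Wstate (m + 2)),
    fun hclosed => hrank (hclosed.closure_subset hborder)⟩
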